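/- Equivariance of leapfrog under affine reparametrisation: let T(ξ) = Jξ + b with J invertible. Define transformed coordinates ξ = J⁻¹(θ − b), momenta p_ξ = Jᵀ p_θ, potential U_ξ(ξ) = U(Jξ + b) and mass matrix M_ξ = Jᵀ M J. Then one leapfrog step of size ε in (ξ, p_ξ) coordinates, mapped back to (θ, p_θ) via θ = Jξ + b and p_θ = J⁻ᵀ p_ξ, coincides with one leapfrog step of size ε applied directly in (θ, p_θ) coordinates with potential U and mass matrix M. -/

import Mathlib

open Matrix

/-- One leapfrog step of size ε with potential `V` and inverse mass matrix
`Ninv`: p½ = p − (ε/2)∇V(x); x' = x + ε N⁻¹ p½; p' = p½ − (ε/2)∇V(x'). -/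
noncomputable def leapfrogStep {d : ℕ} (V : EuclideanSpace ℝ (Fin d) → ℝ)
    (Ninv : Matrix (Fin d) (Fin d) ℝ) (ε : ℝ)
    (p : EuclideanSpace ℝ (Fin d) × EuclideanSpace ℝ (Fin d)) :
    EuclideanSpace ℝ (Fin d) × EuclideanSpace ℝ (Fin d) :=
  let ph := p.2 - (ε / 2) • gradient V p.1
  let x' := p.1 + ε • (Matrix.toEuclideanLin Ninv) ph
  (x', ph - (ε / 2) • gradient V x')

/-! Positions transform by `T ξ = J ξ + b` and momenta by the dual map `p ↦ J⁻ᵀ p`. By the chain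
rule `∇U_ξ = Jᵀ (∇U ∘ T)`, so both momentum kicks transform like momenta, and
`J (Jᵀ M J)⁻¹ Jᵀ = M⁻¹` makes the position drift transform like a position. -/

section Gradient

variable {𝕜 E F : Type*} [RCLike 𝕜]
  [NormedAddCommGroup E] [InnerProductSpace 𝕜 E] [CompleteSpace E]
  [NormedAddCommGroup F] [InnerProductSpace 𝕜 F] [CompleteSpace F]

theorem gradient_comp_continuousLinearEquiv (f : F → 𝕜) (e : E ≃L[𝕜] F) (x : E) :
    gradient (f ∘ e) x = ContinuousLinearMap.adjoint (e : E →L[𝕜] F) (gradient f (e x)) := by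
  refine ext_inner_right 𝕜 fun v => ?_
  rw [gradient, gradient, InnerProductSpace.toDual_symm_apply, e.comp_right_fderiv,
    ContinuousLinearMap.adjoint_inner_left, InnerProductSpace.toDual_symm_apply]
  rfl

theorem gradient_comp_add_right (f : F → 𝕜) (a x : F) :
    gradient (fun y => f (y + a)) x = gradient f (x + a) := by
  rw [gradient, gradient, fderiv_comp_add_right]

end Gradient

namespace Matrix

variable {𝕜 n : Type*} [RCLike 𝕜] [Fintype n] [DecidableEq n]

theorem toEuclideanLin_apply_toEuclideanLin_of_mul_eq_one {A B : Matrix n n 𝕜} (h : A * B = 1)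
    (v : EuclideanSpace 𝕜 n) : toEuclideanLin A (toEuclideanLin B v) = v := by
  rw [← LinearMap.comp_apply, ← toLpLin_mul_same, h, toLpLin_one, LinearMap.id_apply]

theorem gradient_comp_toEuclideanLin_add {J : Matrix n n 𝕜} (hJ : IsUnit J.det)
    (f : EuclideanSpace 𝕜 n → 𝕜) (b x : EuclideanSpace 𝕜 n) :
    gradient (fun y => f (toEuclideanLin J y + b)) x =
      toEuclideanLin Jᴴ (gradient f (toEuclideanLin J x + b)) := by
  let e := ContinuousLinearEquiv.unitsEquiv 𝕜 _
    (((isUnit_iff_isUnit_det J).mpr hJ).map (toEuclideanCLM (n := n) (𝕜 := 𝕜))).unit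
  have he : (e : EuclideanSpace 𝕜 n →L[𝕜] EuclideanSpace 𝕜 n) = toEuclideanCLM (𝕜 := 𝕜) J := rfl
  have hcomp : (fun y => f (toEuclideanLin J y + b)) = (fun z => f (z + b)) ∘ e := rfl
  rw [hcomp, gradient_comp_continuousLinearEquiv, gradient_comp_add_right, he,
    ← ContinuousLinearMap.star_eq_adjoint, ← map_star, ← coe_toEuclideanCLM_eq_toEuclideanLin]
  rfl

end Matrix

theorem leapfrogStep_affine_conj {d : ℕ} {J : Matrix (Fin d) (Fin d) ℝ} (hJ : IsUnit J.det)
    (V Vξ : EuclideanSpace ℝ (Fin d) → ℝ) (b : EuclideanSpace ℝ (Fin d))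
    (hgrad : ∀ ξ, gradient Vξ ξ = toEuclideanLin Jᵀ (gradient V (toEuclideanLin J ξ + b)))
    (N Nξ : Matrix (Fin d) (Fin d) ℝ) (hN : J * Nξ * Jᵀ = N) (ε : ℝ)
    (ξ p : EuclideanSpace ℝ (Fin d)) :
    leapfrogStep V N ε (toEuclideanLin J ξ + b, p) =
      (fun q : EuclideanSpace ℝ (Fin d) × EuclideanSpace ℝ (Fin d) =>
          (toEuclideanLin J q.1 + b, toEuclideanLin (J⁻¹)ᵀ q.2))
        (leapfrogStep Vξ Nξ ε (ξ, toEuclideanLin Jᵀ p)) := by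
  have hdual : (J⁻¹)ᵀ * Jᵀ = 1 := by
    rw [← transpose_mul, mul_nonsing_inv J hJ, transpose_one]
  set ph := p - (ε / 2) • gradient V (toEuclideanLin J ξ + b)
  have hkick : toEuclideanLin Jᵀ p - (ε / 2) • gradient Vξ ξ = toEuclideanLin Jᵀ ph := by
    rw [hgrad, map_sub, map_smul]
  have hdrift : toEuclideanLin J (ξ + ε • toEuclideanLin Nξ (toEuclideanLin Jᵀ ph)) + b =
      toEuclideanLin J ξ + b + ε • toEuclideanLin N ph := by
    rw [← hN]
    simp only [map_add, map_smul, toLpLin_mul_same, LinearMap.comp_apply]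
    abel
  dsimp only [leapfrogStep]
  rw [hkick, hdrift, hgrad, hdrift, ← map_smul (toEuclideanLin Jᵀ), ← map_sub,
    toEuclideanLin_apply_toEuclideanLin_of_mul_eq_one hdual]

theorem leapfrog_affine_equivariance_general {d : ℕ}
    (U : EuclideanSpace ℝ (Fin d) → ℝ)
    (M J : Matrix (Fin d) (Fin d) ℝ) (hJ : IsUnit J.det)
    (b : EuclideanSpace ℝ (Fin d)) (ε : ℝ)
    (Uξ : EuclideanSpace ℝ (Fin d) → ℝ)
    (hUξ : ∀ ξ, Uξ ξ = U ((Matrix.toEuclideanLin J) ξ + b))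
    (Mξ : Matrix (Fin d) (Fin d) ℝ) (hMξ : Mξ = Jᵀ * M * J)
    (θ p : EuclideanSpace ℝ (Fin d)) :
    leapfrogStep U M⁻¹ ε (θ, p) =
      (fun q : EuclideanSpace ℝ (Fin d) × EuclideanSpace ℝ (Fin d) =>
          ((Matrix.toEuclideanLin J) q.1 + b, (Matrix.toEuclideanLin (J⁻¹)ᵀ) q.2))
        (leapfrogStep Uξ Mξ⁻¹ ε
          ((Matrix.toEuclideanLin J⁻¹) (θ - b), (Matrix.toEuclideanLin Jᵀ) p)) := by
  have hgrad (ξ : EuclideanSpace ℝ (Fin d)) :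
      gradient Uξ ξ = toEuclideanLin Jᵀ (gradient U (toEuclideanLin J ξ + b)) := by
    rw [funext hUξ, gradient_comp_toEuclideanLin_add hJ, conjTranspose_eq_transpose_of_trivial]
  have hmass : J * Mξ⁻¹ * Jᵀ = M⁻¹ := by
    rw [hMξ, Matrix.mul_inv_rev, Matrix.mul_inv_rev, ← transpose_nonsing_inv,
      mul_nonsing_inv_cancel_left _ _ hJ, mul_assoc, ← transpose_mul, mul_nonsing_inv _ hJ,
      transpose_one, mul_one]
  have hθ : toEuclideanLin J (toEuclideanLin J⁻¹ (θ - b)) + b = θ := by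
    rw [toEuclideanLin_apply_toEuclideanLin_of_mul_eq_one (mul_nonsing_inv J hJ), sub_add_cancel]
  conv_lhs => rw [← hθ]
  exact leapfrogStep_affine_conj hJ U Uξ b hgrad M⁻¹ Mξ⁻¹ hmass ε _ p

/-- Equivariance of leapfrog under affine reparametrisation
T(ξ) = Jξ + b: a leapfrog step of size ε in the transformed coordinates
ξ = J⁻¹(θ − b), p_ξ = Jᵀ p_θ, with potential U_ξ(ξ) = U(Jξ + b) and mass
matrix M_ξ = Jᵀ M J, mapped back via θ = Jξ + b and p_θ = J⁻ᵀ p_ξ, coincides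
with a leapfrog step of size ε applied directly with potential U and mass
matrix M. -/
theorem leapfrog_affine_equivariance {d : ℕ}
    (U : EuclideanSpace ℝ (Fin d) → ℝ) (hU : Differentiable ℝ U)
    (M J : Matrix (Fin d) (Fin d) ℝ) (hM : M.PosDef) (hJ : IsUnit J.det)
    (b : EuclideanSpace ℝ (Fin d)) (ε : ℝ)
    (Uξ : EuclideanSpace ℝ (Fin d) → ℝ)
    (hUξ : ∀ ξ, Uξ ξ = U ((Matrix.toEuclideanLin J) ξ + b))
    (Mξ : Matrix (Fin d) (Fin d) ℝ) (hMξ : Mξ = Jᵀ * M * J)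
    (θ p : EuclideanSpace ℝ (Fin d)) :
    leapfrogStep U M⁻¹ ε (θ, p) =
      (fun q : EuclideanSpace ℝ (Fin d) × EuclideanSpace ℝ (Fin d) =>
          ((Matrix.toEuclideanLin J) q.1 + b, (Matrix.toEuclideanLin (J⁻¹)ᵀ) q.2))
        (leapfrogStep Uξ Mξ⁻¹ ε
          ((Matrix.toEuclideanLin J⁻¹) (θ - b), (Matrix.toEuclideanLin Jᵀ) p)) :=
  leapfrog_affine_equivariance_general U M J hJ b ε Uξ hUξ Mξ hMξ θ p
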